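/- Let (X, T) be a real Hausdorff locally convex topological vector space. Then X equipped with the Kelleyfication kT is a real compactly generated vector space: kT is a compactly generated topology, addition X × X → X is continuous from k(kT × kT) = k(T × T) to kT, and scalar multiplication ℝ × X → X is continuous from k(τ_ℝ × kT) to kT. In particular, if (X, T) is in addition sequentially complete, then (X, kT) is Seip-convenient. -/

import Mathlib

open Set Filter Topology

/-- The Kelleyfication of a topology `T`: a set is open iff its trace on every `T`-compact
set agrees with the trace of some `T`-open set. -/
def Kelley {X : Type*} (T : TopologicalSpace X) : TopologicalSpace X where
  IsOpen U := ∀ K : Set X, @IsCompact X T K → ∃ V : Set X, T.IsOpen V ∧ U ∩ K = V ∩ K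
  isOpen_univ K _ := ⟨univ, T.isOpen_univ, rfl⟩
  isOpen_inter := by
    intro s t hs ht K hK
    obtain ⟨Vs, hVs, hsK⟩ := hs K hK
    obtain ⟨Vt, hVt, htK⟩ := ht K hK
    refine ⟨Vs ∩ Vt, T.isOpen_inter _ _ hVs hVt, ?_⟩
    ext x
    have h1 := Set.ext_iff.mp hsK x
    have h2 := Set.ext_iff.mp htK x
    simp only [Set.mem_inter_iff] at *
    tauto
  isOpen_sUnion := by
    intro S hS K hK
    choose! V hV1 hV2 using fun t (ht : t ∈ S) => hS t ht K hK
    refine ⟨⋃ t ∈ S, V t, ?_, ?_⟩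
    · letI := T
      exact isOpen_biUnion fun t ht => hV1 t ht
    · ext x
      simp only [Set.mem_inter_iff, Set.mem_sUnion, Set.mem_iUnion, exists_prop]
      constructor
      · rintro ⟨⟨t, htS, hxt⟩, hxK⟩
        have h := Set.ext_iff.mp (hV2 t htS) x
        simp only [Set.mem_inter_iff] at h
        exact ⟨⟨t, htS, (h.mp ⟨hxt, hxK⟩).1⟩, hxK⟩
      · rintro ⟨⟨t, htS, hxt⟩, hxK⟩
        have h := Set.ext_iff.mp (hV2 t htS) x
        simp only [Set.mem_inter_iff] at h
        exact ⟨⟨t, htS, (h.mpr ⟨hxt, hxK⟩).1⟩, hxK⟩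

/-- The k-extension of a topology `T`: like the Kelleyfication, but quantifying only over
`T`-closed `T`-compact sets. -/
def KelleyEx {X : Type*} (T : TopologicalSpace X) : TopologicalSpace X where
  IsOpen U := ∀ K : Set X, @IsCompact X T K → @IsClosed X T K →
    ∃ V : Set X, T.IsOpen V ∧ U ∩ K = V ∩ K
  isOpen_univ K _ _ := ⟨univ, T.isOpen_univ, rfl⟩
  isOpen_inter := by
    intro s t hs ht K hK hKc
    obtain ⟨Vs, hVs, hsK⟩ := hs K hK hKc
    obtain ⟨Vt, hVt, htK⟩ := ht K hK hKc
    refine ⟨Vs ∩ Vt, T.isOpen_inter _ _ hVs hVt, ?_⟩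
    ext x
    have h1 := Set.ext_iff.mp hsK x
    have h2 := Set.ext_iff.mp htK x
    simp only [Set.mem_inter_iff] at *
    tauto
  isOpen_sUnion := by
    intro S hS K hK hKc
    choose! V hV1 hV2 using fun t (ht : t ∈ S) => hS t ht K hK hKc
    refine ⟨⋃ t ∈ S, V t, ?_, ?_⟩
    · letI := T
      exact isOpen_biUnion fun t ht => hV1 t ht
    · ext x
      simp only [Set.mem_inter_iff, Set.mem_sUnion, Set.mem_iUnion, exists_prop]
      constructor
      · rintro ⟨⟨t, htS, hxt⟩, hxK⟩
        have h := Set.ext_iff.mp (hV2 t htS) x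
        simp only [Set.mem_inter_iff] at h
        exact ⟨⟨t, htS, (h.mp ⟨hxt, hxK⟩).1⟩, hxK⟩
      · rintro ⟨⟨t, htS, hxt⟩, hxK⟩
        have h := Set.ext_iff.mp (hV2 t htS) x
        simp only [Set.mem_inter_iff] at h
        exact ⟨⟨t, htS, (h.mpr ⟨hxt, hxK⟩).1⟩, hxK⟩

/-- A topology is compactly generated iff it is Hausdorff and equals its Kelleyfication. -/
def IsCG {X : Type*} (T : TopologicalSpace X) : Prop :=
  @T2Space X T ∧ Kelley T = T

/-- Local compactness in the sense of the paper: every point of an open set `V` has an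
open neighbourhood contained in a compact subset of `V`. -/
def LocCompact {Y : Type*} (t : TopologicalSpace Y) : Prop :=
  ∀ y : Y, ∀ V : Set Y, t.IsOpen V → y ∈ V →
    ∃ K U : Set Y, y ∈ U ∧ t.IsOpen U ∧ U ⊆ K ∧ K ⊆ V ∧ @IsCompact Y t K

/-- A real compactly generated vector space: a compactly generated topology for which the
algebraic operations are continuous from the Kelleyfications of the product topologies. -/
def IsCGVS {X : Type*} [AddCommGroup X] [Module ℝ X] (T : TopologicalSpace X) : Prop :=
  IsCG T ∧
  Continuous[Kelley (@instTopologicalSpaceProd X X T T), T] (fun p : X × X => p.1 + p.2) ∧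
  Continuous[Kelley (@instTopologicalSpaceProd ℝ X inferInstance T), T]
    (fun p : ℝ × X => p.1 • p.2)

/-- Sequential completeness of a topologized additive group: every Cauchy sequence converges. -/
def SeqComplete {X : Type*} [AddCommGroup X] (U : TopologicalSpace X) : Prop :=
  ∀ u : ℕ → X, (∀ V ∈ @nhds X U 0, ∃ N : ℕ, ∀ m ≥ N, ∀ n ≥ N, u m - u n ∈ V) →
    ∃ x : X, Filter.Tendsto u Filter.atTop (@nhds X U x)

/-- Seip-convenient space: a compactly generated real vector space whose topology is the
Kelleyfication of a sequentially complete Hausdorff locally convex vector topology. -/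
def IsSeipConvenient {X : Type*} [AddCommGroup X] [Module ℝ X] (T : TopologicalSpace X) : Prop :=
  IsCGVS T ∧ ∃ U : TopologicalSpace X,
    @IsTopologicalAddGroup X U _ ∧ @ContinuousSMul ℝ X _ _ U ∧
    @LocallyConvexSpace ℝ X _ _ _ _ U ∧ @T2Space X U ∧ SeqComplete U ∧ T = Kelley U

/-- The compact-open topology on the full function space, generated by the usual subbasis. -/
def coTop {X Y : Type*} (tX : TopologicalSpace X) (tY : TopologicalSpace Y) :
    TopologicalSpace (X → Y) :=
  TopologicalSpace.generateFrom
    {S | ∃ (K : Set X) (V : Set Y), @IsCompact X tX K ∧ tY.IsOpen V ∧ S = {f | f '' K ⊆ V}}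

/-- `γ` is Riemann integrable to `x` on `[a,b]` with respect to the topology `T`. -/
def RiemannIntegrableTo {E : Type*} [AddCommGroup E] [Module ℝ E]
    (T : TopologicalSpace E) (a b : ℝ) (γ : ℝ → E) (x : E) : Prop :=
  ∀ V ∈ @nhds E T x, ∃ δ : ℝ, 0 < δ ∧ ∀ (k : ℕ) (t s : ℕ → ℝ),
    t 0 = a → t k = b → (∀ i < k, t i ≤ t (i + 1)) →
    (∀ i < k, t (i + 1) - t i < δ) →
    (∀ i < k, t i ≤ s i ∧ s i ≤ t (i + 1)) →
    (∑ i ∈ Finset.range k, (t (i + 1) - t i) • γ (s i)) ∈ V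

/-- `c` is differentiable to `x` at `t₀` (within `J`) with respect to the topology `T`. -/
def DiffTo {E : Type*} [AddCommGroup E] [Module ℝ E] (T : TopologicalSpace E)
    (J : Set ℝ) (c : ℝ → E) (t₀ : ℝ) (x : E) : Prop :=
  ∀ V ∈ @nhds E T x, ∃ δ : ℝ, 0 < δ ∧ ∀ t : ℝ, t₀ + t ∈ J → 0 < |t| → |t| < δ →
    t⁻¹ • (c (t₀ + t) - c t₀) ∈ V

/-!
A set is `kT`-open iff its trace on every `T`-compact set `K` is open in the subspace topology
of `K`, and `kT` induces the original subspace topology on each `T`-compact set. Hence every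
topology `σ` with `kT ≤ σ ≤ T` has the same compact sets and the same subspace topologies on
them as `T`, so `kσ = kT`. This gives `k(kT) = kT`, and, since a compact subset of a product
lies in the rectangle of its projections, whose subspace topology is the product of the
subspace topologies, also `k(kT × kT) = k(T × T)` and `k(τ_ℝ × kT) = k(τ_ℝ × T)`. The operations
are then continuous for these topologies because `k` preserves continuity.
-/

universe u v

open TopologicalSpace

section Kelleyfication

variable {X : Type u} {σ τ : TopologicalSpace X}

theorem kelley_le (T : TopologicalSpace X) : Kelley T ≤ T := fun U hU _ _ => ⟨U, hU, rfl⟩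

theorem isOpen_kelley_iff {T : TopologicalSpace X} {U : Set X} :
    IsOpen[Kelley T] U ↔
      ∀ K, @IsCompact X T K → IsOpen[induced ((↑) : K → X) T] ((↑) ⁻¹' U) := by
  refine forall₂_congr fun K _ => exists_congr fun V => and_congr_right fun _ => ?_
  rw [Subtype.preimage_coe_eq_preimage_coe_iff, inter_comm K, inter_comm K, eq_comm]

theorem induced_le_of_kelley_le (h : Kelley τ ≤ σ) {K : Set X} (hK : @IsCompact X τ K) :
    induced ((↑) : K → X) τ ≤ induced (↑) σ := by
  rintro _ ⟨U, hU, rfl⟩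
  exact isOpen_kelley_iff.1 (h U hU) K hK

theorem kelley_le_of_forall_isCompact
    (h : ∀ K, @IsCompact X τ K →
      ∃ (Y : Type u) (e : Y → X), K ⊆ range e ∧ induced e τ ≤ induced e σ) :
    Kelley τ ≤ σ := by
  intro U hU K hK
  obtain ⟨Y, e, hKe, hle⟩ := h K hK
  obtain ⟨V, hV, hVU⟩ := hle _ ⟨U, hU, rfl⟩
  refine ⟨V, hV, ?_⟩
  ext x
  refine and_congr_left fun hx => ?_
  obtain ⟨y, rfl⟩ := hKe hx
  exact (Set.ext_iff.1 hVU y).symm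

theorem IsCompact.of_kelley_le (h : Kelley τ ≤ σ) {K : Set X} (hK : @IsCompact X τ K) :
    @IsCompact X σ K := by
  have := (@isCompact_iff_compactSpace X τ K).1 hK
  simpa using @isCompact_range K X (induced (↑) τ) σ this _
    (continuous_le_dom (induced_le_of_kelley_le h hK) continuous_induced_dom)

theorem kelley_eq_of_kelley_le_of_le (h₁ : Kelley τ ≤ σ) (h₂ : σ ≤ τ) :
    Kelley σ = Kelley τ := by
  have hcpt (K : Set X) : @IsCompact X σ K ↔ @IsCompact X τ K :=
    ⟨fun hK => by
      simpa using @IsCompact.image X X σ τ K id hK (continuous_id_of_le h₂), (·.of_kelley_le h₁)⟩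
  ext U
  simp_rw [isOpen_kelley_iff, hcpt]
  exact forall₂_congr fun K hK => by
    rw [le_antisymm (induced_mono h₂) (induced_le_of_kelley_le h₁ hK)]

theorem kelley_kelley (T : TopologicalSpace X) : Kelley (Kelley T) = Kelley T :=
  kelley_eq_of_kelley_le_of_le le_rfl (kelley_le T)

end Kelleyfication

section Product

variable {A : Type u} {B : Type v} {σA τA : TopologicalSpace A} {σB τB : TopologicalSpace B}

theorem kelley_prod_le_prod (hA : Kelley τA ≤ σA) (hB : Kelley τB ≤ σB) :
    Kelley (@instTopologicalSpaceProd A B τA τB) ≤ @instTopologicalSpaceProd A B σA σB := by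
  refine kelley_le_of_forall_isCompact fun K hK =>
    ⟨(Prod.fst '' K) × (Prod.snd '' K), fun p => (p.1, p.2), ?_, ?_⟩
  · rintro ⟨a, b⟩ hab
    exact ⟨(⟨a, _, hab, rfl⟩, ⟨b, _, hab, rfl⟩), rfl⟩
  · rw [← @prod_induced_induced _ _ τA τB, ← @prod_induced_induced _ _ σA σB]
    exact TopologicalSpace.prod_mono
      (induced_le_of_kelley_le hA (@IsCompact.image _ _ _ τA K _ hK (@continuous_fst A B τA τB)))
      (induced_le_of_kelley_le hB (@IsCompact.image _ _ _ τB K _ hK (@continuous_snd A B τA τB)))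

theorem kelley_prod_eq_of_kelley_le_of_le (hA₁ : Kelley τA ≤ σA) (hA₂ : σA ≤ τA)
    (hB₁ : Kelley τB ≤ σB) (hB₂ : σB ≤ τB) :
    Kelley (@instTopologicalSpaceProd A B σA σB) = Kelley (@instTopologicalSpaceProd A B τA τB) :=
  kelley_eq_of_kelley_le_of_le (kelley_prod_le_prod hA₁ hB₁) (TopologicalSpace.prod_mono hA₂ hB₂)

end Product

theorem Continuous.kelley {X Y : Type*} {tX : TopologicalSpace X} {tY : TopologicalSpace Y}
    {f : X → Y} (hf : Continuous[tX, tY] f) : Continuous[Kelley tX, Kelley tY] f := by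
  refine continuous_def.2 fun U hU K hK => ?_
  obtain ⟨V, hV, hUV⟩ := hU (f '' K) (@IsCompact.image X Y tX tY K f hK hf)
  refine ⟨f ⁻¹' V, continuous_def.1 hf V hV, ?_⟩
  ext x
  exact and_congr_left fun hx =>
    and_congr_left_iff.1 (Set.ext_iff.1 hUV (f x)) (mem_image_of_mem f hx)

/-- The Kelleyfication of a real Hausdorff locally convex topological vector
space is a real compactly generated vector space; if moreover the space is sequentially
complete, the Kelleyfication is Seip-convenient. -/
theorem kelley_of_lcs_isCGVS {X : Type*} [AddCommGroup X] [Module ℝ X]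
    (T : TopologicalSpace X)
    (h1 : @IsTopologicalAddGroup X T _) (h2 : @ContinuousSMul ℝ X _ _ T)
    (h3 : @LocallyConvexSpace ℝ X _ _ _ _ T) (h4 : @T2Space X T) :
    IsCGVS (Kelley T) ∧ (SeqComplete T → IsSeipConvenient (Kelley T)) := by
  have hadd : Continuous[Kelley (@instTopologicalSpaceProd X X T T), Kelley T]
      (fun p : X × X => p.1 + p.2) := (@continuous_add X T _ h1.toContinuousAdd).kelley
  have hsmul : Continuous[Kelley (@instTopologicalSpaceProd ℝ X inferInstance T), Kelley T]
      (fun p : ℝ × X => p.1 • p.2) := (@continuous_smul ℝ X _ _ T h2).kelley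
  have hCGVS : IsCGVS (Kelley T) := by
    refine ⟨⟨t2Space_antitone (kelley_le T) h4, kelley_kelley T⟩, ?_, ?_⟩
    · rwa [kelley_prod_eq_of_kelley_le_of_le le_rfl (kelley_le T) le_rfl (kelley_le T)]
    · rwa [kelley_prod_eq_of_kelley_le_of_le (kelley_le _) le_rfl le_rfl (kelley_le T)]
  exact ⟨hCGVS, fun hT => ⟨hCGVS, T, h1, h2, h3, h4, hT, rfl⟩⟩
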